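/- Sum-of-squares representation of the lower-bound objective: for every x ∈ ℓ², ∑_{i=1}^n f_i(x) = (n(L − μ)/(12ρ)) · [ ∑_{l=1}^∞ (ρ x_l − x_{l+1})² + (x_1 − ρ)² + ρ − ρ² ]. -/

import Mathlib

/-!
Grouping the nodes, the objective is `m` times
`(3μ/2)‖x‖² + ((L - μ)/4) [(x₁ - 1)² + ∑ₗ (xₗ - xₗ₊₁)²]`:
the couplings of `V₁` and those of `V₃` interleave into the whole path `∑ₗ (xₗ - xₗ₊₁)²`.
Expanding both sides in `‖x‖²`, `∑ₗ xₗ xₗ₊₁` and `x₁`, all coefficients agree except those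
of `‖x‖²`, whose agreement is the identity `(1 - ρ)² (L - μ) = 6 μ ρ`; it holds because
`s = (1 + ρ)/(1 - ρ)` satisfies `3 μ s² = 2 L + μ`.
-/

open scoped BigOperators

/-- The real Hilbert space `ℓ²` of square-summable sequences (indexed from `0`; the paper's
coordinate `l ≥ 1` corresponds to the index `l - 1`). -/
abbrev ell2 : Type := lp (fun _ : ℕ => ℝ) 2

/-- The function stored at the nodes of `V₁`:
`f(x) = (μ/2)‖x‖² + ((L−μ)/4)[(x_1 − 1)² + ∑_{l≥1} (x_{2l} − x_{2l+1})²]` (paper coordinates). -/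
noncomputable def fNodeV1 (μ L : ℝ) (x : ell2) : ℝ :=
  (μ / 2) * ‖x‖ ^ 2 +
    ((L - μ) / 4) * ((x 0 - 1) ^ 2 + ∑' l : ℕ, (x (2 * l + 1) - x (2 * l + 2)) ^ 2)

/-- The function stored at the nodes of `V₂`: `f(x) = (μ/2)‖x‖²`. -/
noncomputable def fNodeV2 (μ : ℝ) (x : ell2) : ℝ := (μ / 2) * ‖x‖ ^ 2

/-- The function stored at the nodes of `V₃`:
`f(x) = (μ/2)‖x‖² + ((L−μ)/4) ∑_{l≥1} (x_{2l−1} − x_{2l})²` (paper coordinates). -/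
noncomputable def fNodeV3 (μ L : ℝ) (x : ell2) : ℝ :=
  (μ / 2) * ‖x‖ ^ 2 + ((L - μ) / 4) * ∑' l : ℕ, (x (2 * l) - x (2 * l + 1)) ^ 2

/-- The function `f_i` for node `i ∈ {1, …, n}` with `n = 3m`:
nodes `1 … m` form `V₁`, nodes `m+1 … 2m` form `V₂`, nodes `2m+1 … 3m` form `V₃`. -/
noncomputable def fNode (μ L : ℝ) (m i : ℕ) (x : ell2) : ℝ :=
  if i ≤ m then fNodeV1 μ L x else if i ≤ 2 * m then fNodeV2 μ x else fNodeV3 μ L x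

lemma lp.hasSum_sq {ι : Type*} (x : lp (fun _ : ι => ℝ) 2) :
    HasSum (fun i => x i ^ 2) (‖x‖ ^ 2) := by
  simpa [← real_inner_self_eq_norm_sq, sq] using lp.hasSum_inner (𝕜 := ℝ) x x

lemma summable_mul_of_summable_sq {ι : Type*} {a b : ι → ℝ} (ha : Summable fun i => a i ^ 2)
    (hb : Summable fun i => b i ^ 2) : Summable fun i => a i * b i :=
  Summable.of_norm_bounded (ha.add hb) fun i => by
    rw [Real.norm_eq_abs, abs_mul, ← sq_abs (a i), ← sq_abs (b i)]
    nlinarith [two_mul_le_add_sq |a i| |b i|, abs_nonneg (a i), abs_nonneg (b i)]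

lemma summable_mul_succ_of_summable_sq {a : ℕ → ℝ} (ha : Summable fun l => a l ^ 2) :
    Summable fun l => a l * a (l + 1) :=
  summable_mul_of_summable_sq ha ((summable_nat_add_iff 1).2 ha)

lemma hasSum_mul_sub_succ_sq {a : ℕ → ℝ} {S A : ℝ} (hS : HasSum (fun l => a l ^ 2) S)
    (hA : HasSum (fun l => a l * a (l + 1)) A) (c : ℝ) :
    HasSum (fun l => (c * a l - a (l + 1)) ^ 2) ((c ^ 2 + 1) * S - a 0 ^ 2 - 2 * c * A) := by
  have hshift : HasSum (fun l => a (l + 1) ^ 2) (S - a 0 ^ 2) := by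
    simpa using (hasSum_nat_add_iff' 1).2 hS
  rw [show (c ^ 2 + 1) * S - a 0 ^ 2 - 2 * c * A = c ^ 2 * S + (S - a 0 ^ 2) - 2 * c * A by ring]
  exact (((hS.mul_left (c ^ 2)).add hshift).sub (hA.mul_left (2 * c))).congr_fun fun l => by ring

lemma sum_fNode (μ L : ℝ) (m : ℕ) (x : ell2) :
    ∑ i ∈ Finset.Icc 1 (3 * m), fNode μ L m i x =
      m * (fNodeV1 μ L x + fNodeV2 μ x + fNodeV3 μ L x) := by
  rw [show Finset.Icc 1 (3 * m) = Finset.Ioc 0 (3 * m) from Finset.Icc_add_one_left_eq_Ioc 0 _,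
    ← Finset.sum_Ioc_consecutive _ (Nat.zero_le (2 * m)) (by omega : 2 * m ≤ 3 * m),
    ← Finset.sum_Ioc_consecutive _ (Nat.zero_le m) (by omega : m ≤ 2 * m),
    Finset.sum_eq_card_nsmul (b := fNodeV1 μ L x), Finset.sum_eq_card_nsmul (b := fNodeV2 μ x),
    Finset.sum_eq_card_nsmul (b := fNodeV3 μ L x)]
  · simp only [Nat.card_Ioc, nsmul_eq_mul]
    rw [show 2 * m - m = m by omega, show 3 * m - 2 * m = m by omega, Nat.sub_zero]
    ring
  all_goals
    intro i hi
    rw [Finset.mem_Ioc] at hi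
    unfold fNode
    split_ifs <;> first | rfl | omega

lemma fNodeV1_add_fNodeV2_add_fNodeV3 (μ L : ℝ) (x : ell2) :
    fNodeV1 μ L x + fNodeV2 μ x + fNodeV3 μ L x =
      3 * μ / 2 * ‖x‖ ^ 2 + (L - μ) / 4 * ((x 0 - 1) ^ 2 + ∑' l, (x l - x (l + 1)) ^ 2) := by
  have hS := lp.hasSum_sq x
  have hdiff : Summable fun l => (x l - x (l + 1)) ^ 2 := by
    have hA := (summable_mul_succ_of_summable_sq hS.summable).hasSum
    simpa using (hasSum_mul_sub_succ_sq hS hA 1).summable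
  have he : Summable fun l => (x (2 * l) - x (2 * l + 1)) ^ 2 :=
    hdiff.comp_injective (mul_right_injective₀ two_ne_zero)
  have ho : Summable fun l => (x (2 * l + 1) - x (2 * l + 2)) ^ 2 :=
    hdiff.comp_injective <| (add_left_injective 1).comp (mul_right_injective₀ two_ne_zero)
  rw [← tsum_even_add_odd (f := fun l => (x l - x (l + 1)) ^ 2) he ho]
  unfold fNodeV1 fNodeV2 fNodeV3
  ring

lemma one_lt_sqrt_two_mul_div_add_one_third {μ L : ℝ} (hμ : 0 < μ) (hμL : μ < L) :
    1 < Real.sqrt (2 * L / (3 * μ) + 1 / 3) := by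
  refine Real.lt_sqrt_of_sq_lt ?_
  rw [one_pow, ← sub_lt_iff_lt_add, lt_div_iff₀ (by positivity)]
  linarith

lemma three_mul_mul_sq_sqrt_two_mul_div_add_one_third {μ L : ℝ} (hμ : 0 < μ)
    (hL : -μ ≤ 2 * L) :
    3 * μ * Real.sqrt (2 * L / (3 * μ) + 1 / 3) ^ 2 = 2 * L + μ := by
  rw [Real.sq_sqrt]
  · field_simp
  · rw [show 2 * L / (3 * μ) + 1 / 3 = (2 * L + μ) / (3 * μ) by field_simp]
    exact div_nonneg (by linarith) (by positivity)

lemma one_sub_div_sq_mul {μ L s : ℝ} (hs : 3 * μ * s ^ 2 = 2 * L + μ) (hs' : s + 1 ≠ 0) :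
    (1 - (s - 1) / (s + 1)) ^ 2 * (L - μ) = 6 * μ * ((s - 1) / (s + 1)) := by
  field_simp
  linear_combination -2 * hs

theorem lower_bound_objective_sum_of_squares_general (μ L : ℝ) (hμ : 0 < μ) (hμL : μ < L)
    (ρ : ℝ)
    (hρ : ρ = (Real.sqrt (2 * L / (3 * μ) + 1 / 3) - 1) /
      (Real.sqrt (2 * L / (3 * μ) + 1 / 3) + 1))
    (m : ℕ) (x : ell2) :
    (∑ i ∈ Finset.Icc 1 (3 * m), fNode μ L m i x) =
      ((3 * m : ℝ) * (L - μ) / (12 * ρ)) *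
        ((∑' l : ℕ, (ρ * x l - x (l + 1)) ^ 2) + (x 0 - ρ) ^ 2 + ρ - ρ ^ 2) := by
  have hs1 := one_lt_sqrt_two_mul_div_add_one_third hμ hμL
  have hs := three_mul_mul_sq_sqrt_two_mul_div_add_one_third hμ (by linarith : -μ ≤ 2 * L)
  have hρpos : 0 < ρ := hρ ▸ div_pos (by linarith) (by linarith)
  have hρ_spec : (1 - ρ) ^ 2 * (L - μ) = 6 * μ * ρ :=
    hρ ▸ one_sub_div_sq_mul hs (by linarith)
  have hS := lp.hasSum_sq x
  have hA := (summable_mul_succ_of_summable_sq hS.summable).hasSum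
  have hdiff := hasSum_mul_sub_succ_sq hS hA 1
  simp only [one_mul, one_pow] at hdiff
  rw [sum_fNode, fNodeV1_add_fNodeV2_add_fNodeV3, hdiff.tsum_eq,
    (hasSum_mul_sub_succ_sq hS hA ρ).tsum_eq]
  field_simp
  linear_combination (-24 * (m : ℝ) * ‖x‖ ^ 2) * hρ_spec

/-- **Sum-of-squares representation of the lower-bound objective.**
For every `x ∈ ℓ²`,
`∑_{i=1}^n f_i(x) = (n(L − μ)/(12ρ)) [∑_{l≥1} (ρ x_l − x_{l+1})² + (x_1 − ρ)² + ρ − ρ²]`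
(paper coordinates). -/
theorem lower_bound_objective_sum_of_squares (μ L : ℝ) (hμ : 0 < μ) (hμL : μ < L)
    (ρ : ℝ)
    (hρ : ρ = (Real.sqrt (2 * L / (3 * μ) + 1 / 3) - 1) /
      (Real.sqrt (2 * L / (3 * μ) + 1 / 3) + 1))
    (m : ℕ) (hm : 1 ≤ m) (x : ell2) :
    (∑ i ∈ Finset.Icc 1 (3 * m), fNode μ L m i x) =
      ((3 * m : ℝ) * (L - μ) / (12 * ρ)) *
        ((∑' l : ℕ, (ρ * x l - x (l + 1)) ^ 2) + (x 0 - ρ) ^ 2 + ρ - ρ ^ 2) :=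
  lower_bound_objective_sum_of_squares_general μ L hμ hμL ρ hρ m x
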